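/- arXiv:0808.0258 — 3 statements merged into one kernel-verified Lean document; each statement's English description precedes it below -/
import Mathlib

section
/- If ϱ:(0,∞)→(0,∞) is regular and submultiplicative, then α(ϱ) := sup_{x∈(0,1)} log ϱ(x)/log x and β(ϱ) := inf_{x∈(1,∞)} log ϱ(x)/log x satisfy −∞ < α(ϱ) ≤ β(ϱ) < +∞. -/
noncomputable section

/-- A function is submultiplicative if `ρ (x*y) ≤ ρ x * ρ y` for all positive `x, y`. -/
def Submult (ρ : ℝ → ℝ) : Prop :=
  ∀ x ∈ Set.Ioi (0:ℝ), ∀ y ∈ Set.Ioi (0:ℝ), ρ (x * y) ≤ ρ x * ρ y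

/-- A function is regular if it is bounded from above in some open neighborhood of `1`. -/
def Regular (ρ : ℝ → ℝ) : Prop :=
  ∃ ε > (0:ℝ), ∃ M : ℝ, ∀ x : ℝ, |x - 1| < ε → ρ x ≤ M

/-- Positivity on `(0, ∞)`. -/
def PosOn (ρ : ℝ → ℝ) : Prop := ∀ x ∈ Set.Ioi (0:ℝ), 0 < ρ x

/-- The quotient `log ρ(x) / log x`. -/
noncomputable def idxFun (ρ : ℝ → ℝ) (x : ℝ) : ℝ := Real.log (ρ x) / Real.log x

/-- Lower index `α(ρ) = sup_{x ∈ (0,1)} log ρ(x)/log x`. -/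
noncomputable def alphaIdx (ρ : ℝ → ℝ) : ℝ := sSup (idxFun ρ '' Set.Ioo 0 1)

/-- Upper index `β(ρ) = inf_{x ∈ (1,∞)} log ρ(x)/log x`. -/
noncomputable def betaIdx (ρ : ℝ → ℝ) : ℝ := sInf (idxFun ρ '' Set.Ioi 1)

/-
Put `f t = log ρ(eᵗ)`. Submultiplicativity of `ρ` makes `f` subadditive, and regularity makes `f`
bounded above near `0`, hence, by subadditivity, bounded on every compact interval. For
`u < 0 < v` and `n ∈ ℕ` write `n v = m (-u) + w` with `m = ⌊n v / (-u)⌋` and `0 ≤ w < -u`;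
subadditivity gives `f w ≤ f 0 + n f(v) + m f(u)`, and as `f w` stays bounded while `n → ∞`, this
forces `f(u)/u ≤ f(v)/v`. Since `log ρ(x) / log x = f(log x) / log x`, every quotient over `(0,1)`
lies below every quotient over `(1,∞)`.
-/

open Real Set

lemma nonneg_of_forall_nat_mul_ge {c K : ℝ} (h : ∀ n : ℕ, K ≤ n * c) : 0 ≤ c := by
  by_contra! hc
  obtain ⟨n, hn⟩ := exists_nat_gt (K / c)
  linarith [h n, (div_lt_iff_of_neg hc).mp hn]

section Subadditive

variable {f : ℝ → ℝ}

lemma subadditive_add_nat_mul_le (hf : ∀ x y, f (x + y) ≤ f x + f y) (n : ℕ) (x t : ℝ) :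
    f (x + n * t) ≤ f x + n * f t := by
  induction n with
  | zero => simp
  | succ n ih =>
    calc f (x + (n + 1 : ℕ) * t) = f ((x + n * t) + t) := by push_cast; ring_nf
      _ ≤ f x + n * f t + f t := by linarith [hf (x + n * t) t]
      _ = f x + (n + 1 : ℕ) * f t := by push_cast; ring

lemma subadditive_exists_le_of_abs_le (hf : ∀ x y, f (x + y) ≤ f x + f y) {δ M : ℝ} (hδ : 0 < δ)
    (hM : ∀ s, |s| < δ → f s ≤ M) (R : ℝ) : ∃ C, ∀ w, |w| ≤ R → f w ≤ C := by
  set k : ℕ := ⌈R / δ⌉₊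
  refine ⟨f 0 + (k + 1 : ℕ) * M, fun w hw => ?_⟩
  have hk : (0 : ℝ) < (k + 1 : ℕ) := by positivity
  have hsmall : |w / (k + 1 : ℕ)| < δ := by
    rw [abs_div, abs_of_pos hk, div_lt_iff₀ hk]
    have hRk : R ≤ k * δ := (div_le_iff₀ hδ).mp (Nat.le_ceil _)
    push_cast
    nlinarith
  calc f w = f (0 + (k + 1 : ℕ) * (w / (k + 1 : ℕ))) := by field_simp; ring_nf
    _ ≤ f 0 + (k + 1 : ℕ) * f (w / (k + 1 : ℕ)) := subadditive_add_nat_mul_le hf _ _ _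
    _ ≤ f 0 + (k + 1 : ℕ) * M := by gcongr; exact hM _ hsmall

lemma subadditive_exists_ge_of_abs_le (hf : ∀ x y, f (x + y) ≤ f x + f y) {δ M : ℝ} (hδ : 0 < δ)
    (hM : ∀ s, |s| < δ → f s ≤ M) (R : ℝ) : ∃ C, ∀ w, |w| ≤ R → C ≤ f w := by
  obtain ⟨C, hC⟩ := subadditive_exists_le_of_abs_le hf hδ hM R
  refine ⟨f 0 - C, fun w hw => ?_⟩
  have h0 : f 0 ≤ f w + f (-w) := by simpa using hf w (-w)
  linarith [hC (-w) (by rwa [abs_neg])]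

lemma subadditive_nonneg_of_ge (hf : ∀ x y, f (x + y) ≤ f x + f y) {a v C : ℝ} (ha : 0 < a)
    (hv : 0 < v) (hC : ∀ w ∈ Icc 0 a, C ≤ f w) : 0 ≤ a * f v + v * f (-a) := by
  refine nonneg_of_forall_nat_mul_ge (K := a * (C - f 0 - |f (-a)|)) fun n => ?_
  set m : ℕ := ⌊n * v / a⌋₊
  have hm : (m : ℝ) ≤ n * v / a := Nat.floor_le (by positivity)
  have hm' : n * v / a < m + 1 := Nat.lt_floor_add_one _
  have hw : n * v - m * a ∈ Icc 0 a := by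
    constructor
    · nlinarith [(le_div_iff₀ ha).mp hm]
    · nlinarith [(div_lt_iff₀ ha).mp hm']
  have hsplit : f (n * v - m * a) ≤ f 0 + n * f v + m * f (-a) := by
    calc f (n * v - m * a) = f ((0 + n * v) + m * (-a)) := by ring_nf
      _ ≤ f (0 + n * v) + m * f (-a) := subadditive_add_nat_mul_le hf _ _ _
      _ ≤ f 0 + n * f v + m * f (-a) := by linarith [subadditive_add_nat_mul_le hf n 0 v]
  -- replacing `m` by `n v / a` costs at most `|f (-a)|`, since `0 ≤ n v / a - m < 1`
  have hround : a * (m * f (-a)) ≤ n * v * f (-a) + a * |f (-a)| := by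
    have hfrac : |n * v / a - m| ≤ 1 := abs_le.mpr ⟨by linarith, by linarith⟩
    have : -((n * v / a - m) * f (-a)) ≤ |f (-a)| := by
      calc _ ≤ |(n * v / a - m) * f (-a)| := neg_le_abs _
        _ ≤ |f (-a)| := by rw [abs_mul]; exact mul_le_of_le_one_left (abs_nonneg _) hfrac
    have hexpand : a * -((n * v / a - m) * f (-a)) = a * (m * f (-a)) - n * v * f (-a) := by
      field_simp
      ring
    linarith [mul_le_mul_of_nonneg_left this ha.le]
  have hscaled := mul_le_mul_of_nonneg_left ((hC _ hw).trans hsplit) ha.le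
  linarith

lemma subadditive_div_le_div (hf : ∀ x y, f (x + y) ≤ f x + f y) {δ M : ℝ} (hδ : 0 < δ)
    (hM : ∀ s, |s| < δ → f s ≤ M) {u v : ℝ} (hu : u < 0) (hv : 0 < v) : f u / u ≤ f v / v := by
  obtain ⟨C, hC⟩ := subadditive_exists_ge_of_abs_le hf hδ hM (-u)
  have key := subadditive_nonneg_of_ge hf (neg_pos.mpr hu) hv (C := C)
    fun w hw => hC w (abs_le.mpr ⟨by linarith [hw.1], by linarith [hw.2]⟩)
  rw [neg_neg] at key
  rw [← neg_div_neg_eq, div_le_div_iff₀ (neg_pos.mpr hu) hv]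
  linarith

end Subadditive

lemma Submult.log_comp_exp_add_le {ρ : ℝ → ℝ} (hpos : PosOn ρ) (hsub : Submult ρ) (u v : ℝ) :
    log (ρ (exp (u + v))) ≤ log (ρ (exp u)) + log (ρ (exp v)) := by
  rw [exp_add, ← log_mul (hpos _ (exp_pos u)).ne' (hpos _ (exp_pos v)).ne']
  exact log_le_log (hpos _ (mul_pos (exp_pos u) (exp_pos v))) (hsub _ (exp_pos u) _ (exp_pos v))

lemma Regular.exists_log_comp_exp_le {ρ : ℝ → ℝ} (hpos : PosOn ρ) (hreg : Regular ρ) :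
    ∃ δ > 0, ∃ M, ∀ s, |s| < δ → log (ρ (exp s)) ≤ M := by
  obtain ⟨ε, hε, M, hM⟩ := hreg
  obtain ⟨δ, hδ, hexp⟩ := Metric.continuousAt_iff.mp (continuous_exp.continuousAt (x := 0)) ε hε
  refine ⟨δ, hδ, log M, fun s hs => log_le_log (hpos _ (exp_pos s)) (hM _ ?_)⟩
  simpa [Real.dist_eq] using @hexp s (by simpa [Real.dist_eq] using hs)

lemma idxFun_eq_div {ρ : ℝ → ℝ} {x : ℝ} (hx : 0 < x) :
    idxFun ρ x = log (ρ (exp (log x))) / log x := by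
  rw [exp_log hx, idxFun]

lemma idxFun_le_idxFun {ρ : ℝ → ℝ} (hpos : PosOn ρ) (hreg : Regular ρ) (hsub : Submult ρ)
    {x y : ℝ} (hx : x ∈ Ioo 0 1) (hy : 1 < y) : idxFun ρ x ≤ idxFun ρ y := by
  obtain ⟨δ, hδ, M, hM⟩ := hreg.exists_log_comp_exp_le hpos
  rw [idxFun_eq_div hx.1, idxFun_eq_div (one_pos.trans hy)]
  exact subadditive_div_le_div (hsub.log_comp_exp_add_le hpos) hδ hM
    (log_neg hx.1 hx.2) (log_pos hy)

/-- If `ρ : (0,∞) → (0,∞)` is regular and submultiplicative, then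
`−∞ < α(ρ) ≤ β(ρ) < +∞`, i.e. the defining sup/inf are finite and `α(ρ) ≤ β(ρ)`. -/
theorem indices_finite_and_ordered (ρ : ℝ → ℝ)
    (hpos : PosOn ρ) (hreg : Regular ρ) (hsub : Submult ρ) :
    BddAbove (idxFun ρ '' Set.Ioo 0 1) ∧ BddBelow (idxFun ρ '' Set.Ioi 1) ∧
      alphaIdx ρ ≤ betaIdx ρ := by
  have hle : ∀ x ∈ Ioo (0 : ℝ) 1, ∀ y ∈ Ioi (1 : ℝ), idxFun ρ x ≤ idxFun ρ y :=
    fun x hx y hy => idxFun_le_idxFun hpos hreg hsub hx hy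
  have half_mem : (1 / 2 : ℝ) ∈ Ioo 0 1 := by norm_num
  have two_mem : (2 : ℝ) ∈ Ioi 1 := by norm_num
  refine ⟨⟨idxFun ρ 2, ?_⟩, ⟨idxFun ρ (1 / 2), ?_⟩, ?_⟩
  · rintro _ ⟨x, hx, rfl⟩
    exact hle x hx 2 two_mem
  · rintro _ ⟨y, hy, rfl⟩
    exact hle _ half_mem y hy
  · refine csSup_le ⟨_, mem_image_of_mem _ half_mem⟩ ?_
    rintro _ ⟨x, hx, rfl⟩
    refine le_csInf ⟨_, mem_image_of_mem _ two_mem⟩ ?_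
    rintro _ ⟨y, hy, rfl⟩
    exact hle x hx y hy
end
end

section
/- If ϱ:(0,∞)→(0,∞) is regular and submultiplicative, then for every ε>0 there exists x₀>1 such that ϱ(x) ≤ x^{α(ϱ)−ε} for all x∈(0, x₀⁻¹) and ϱ(x) ≤ x^{β(ϱ)+ε} for all x∈(x₀,∞). -/
/-!
In logarithmic coordinates `f t = log ρ(eᵗ)` is subadditive and bounded above near `0`, hence
on every bounded interval. The definition of `β` gives `t₁ > 0` with `f t₁ ≤ (β + ε/2) t₁`;
writing `t = n t₁ + r` with `0 ≤ r < t₁` gives `f t ≤ n f t₁ + f r ≤ (β + ε/2) t + O(1)`, which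
is below `(β + ε) t` for large `t`. The `α`-side is the same argument for `t ↦ f (-t)`.
-/

noncomputable section

open Filter Topology

section Subadditive

variable {f : ℝ → ℝ}

theorem subadditive_natCast_mul_add_le (hf : ∀ s t, f (s + t) ≤ f s + f t) (n : ℕ) (s r : ℝ) :
    f (n * s + r) ≤ n * f s + f r := by
  induction n with
  | zero => simp
  | succ n ih =>
    calc f ((n + 1 : ℕ) * s + r) = f (s + (n * s + r)) := by push_cast; ring_nf
      _ ≤ f s + f (n * s + r) := hf _ _
      _ ≤ f s + (n * f s + f r) := by linarith
      _ = (n + 1 : ℕ) * f s + f r := by push_cast; ring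

theorem subadditive_exists_le_of_abs_le_s5 (hf : ∀ s t, f (s + t) ≤ f s + f t) {C : ℝ}
    (h0 : ∀ᶠ t in 𝓝 0, f t ≤ C) (b : ℝ) : ∃ C', ∀ r, |r| ≤ b → f r ≤ C' := by
  obtain ⟨δ, hδ, hδC⟩ := Metric.eventually_nhds_iff.mp h0
  set n : ℕ := ⌈b / δ⌉₊ + 1
  have hn : (0 : ℝ) < n := by positivity
  have hbn : b < n * δ := by
    have := (div_le_iff₀ hδ).mp (Nat.le_ceil (b / δ))
    push_cast [n]
    linarith
  refine ⟨n * C + C, fun r hr => ?_⟩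
  have hsmall : f (r / n) ≤ C := hδC <| by
    rw [Real.dist_eq, sub_zero, abs_div, Nat.abs_cast, div_lt_iff₀ hn]
    linarith
  calc f r = f (n * (r / n) + 0) := by rw [add_zero]; field_simp
    _ ≤ n * f (r / n) + f 0 := subadditive_natCast_mul_add_le hf n _ _
    _ ≤ n * C + C := by gcongr; exact hδC (by simpa using hδ)

theorem subadditive_exists_le_mul_add (hf : ∀ s t, f (s + t) ≤ f s + f t) {C : ℝ}
    (h0 : ∀ᶠ t in 𝓝 0, f t ≤ C) {t₁ γ : ℝ} (ht₁ : 0 < t₁) (hγ : f t₁ ≤ γ * t₁) :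
    ∃ K, ∀ t ≥ 0, f t ≤ γ * t + K := by
  obtain ⟨C', hC'⟩ := subadditive_exists_le_of_abs_le_s5 hf h0 t₁
  refine ⟨|γ| * t₁ + C', fun t ht => ?_⟩
  set n := ⌊t / t₁⌋₊
  have hn_le : n * t₁ ≤ t := (le_div_iff₀ ht₁).mp (Nat.floor_le (by positivity))
  have hlt : t < n * t₁ + t₁ := by
    have := (div_lt_iff₀ ht₁).mp (Nat.lt_floor_add_one (t / t₁))
    linarith
  have hgap : γ * (n * t₁) ≤ γ * t + |γ| * t₁ := by
    have : |n * t₁ - t| ≤ t₁ := abs_le.mpr ⟨by linarith, by linarith⟩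
    calc γ * (n * t₁) = γ * t + γ * (n * t₁ - t) := by ring
      _ ≤ γ * t + |γ| * |n * t₁ - t| := by rw [← abs_mul]; gcongr; exact le_abs_self _
      _ ≤ γ * t + |γ| * t₁ := by gcongr
  calc f t = f (n * t₁ + (t - n * t₁)) := by ring_nf
    _ ≤ n * f t₁ + f (t - n * t₁) := subadditive_natCast_mul_add_le hf n _ _
    _ ≤ n * (γ * t₁) + C' := by
      gcongr
      exact hC' _ (abs_le.mpr ⟨by linarith, by linarith⟩)
    _ ≤ γ * t + (|γ| * t₁ + C') := by linarith

theorem subadditive_eventually_le_mul (hf : ∀ s t, f (s + t) ≤ f s + f t) {C : ℝ}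
    (h0 : ∀ᶠ t in 𝓝 0, f t ≤ C) {t₁ γ ε : ℝ} (ht₁ : 0 < t₁) (hγ : f t₁ ≤ γ * t₁)
    (hε : 0 < ε) : ∀ᶠ t in atTop, f t ≤ (γ + ε) * t := by
  obtain ⟨K, hK⟩ := subadditive_exists_le_mul_add hf h0 ht₁ hγ
  filter_upwards [eventually_ge_atTop 0, eventually_ge_atTop (K / ε)] with t ht hKt
  have : K ≤ ε * t := by rwa [div_le_iff₀' hε] at hKt
  linarith [hK t ht]

end Subadditive

def logConj (ρ : ℝ → ℝ) (t : ℝ) : ℝ := Real.log (ρ (Real.exp t))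

section Indices

variable {ρ : ℝ → ℝ}

theorem logConj_log {x : ℝ} (hx : 0 < x) : logConj ρ (Real.log x) = Real.log (ρ x) := by
  rw [logConj, Real.exp_log hx]

theorem logConj_add_le (hpos : PosOn ρ) (hsub : Submult ρ) (s t : ℝ) :
    logConj ρ (s + t) ≤ logConj ρ s + logConj ρ t := by
  have hs := hpos _ (Real.exp_pos s)
  have ht := hpos _ (Real.exp_pos t)
  rw [logConj, logConj, logConj, Real.exp_add, ← Real.log_mul hs.ne' ht.ne']
  exact Real.log_le_log (hpos _ (mul_pos (Real.exp_pos s) (Real.exp_pos t)))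
    (hsub _ (Real.exp_pos s) _ (Real.exp_pos t))

theorem Regular.exists_eventually_logConj_le (hreg : Regular ρ) (hpos : PosOn ρ) :
    ∃ C, ∀ᶠ t in 𝓝 0, logConj ρ t ≤ C := by
  obtain ⟨ε, hε, M, hM⟩ := hreg
  have hρ : ∀ᶠ x in 𝓝 1, ρ x ≤ M := Metric.eventually_nhds_iff.mpr ⟨ε, hε, fun y hy => hM y hy⟩
  have hexp : Tendsto Real.exp (𝓝 0) (𝓝 1) := by simpa using Real.continuous_exp.tendsto 0
  exact ⟨Real.log M, (hexp.eventually hρ).mono fun t ht =>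
    Real.log_le_log (hpos _ (Real.exp_pos t)) ht⟩

/- `Real.lt_sInf_add_pos` and `Real.add_neg_lt_sSup` also hold for unbounded sets, where
`sInf`/`sSup` is the junk value `0`. -/
theorem exists_pos_logConj_le_betaIdx_add {ε : ℝ} (hε : 0 < ε) :
    ∃ t > 0, logConj ρ t ≤ (betaIdx ρ + ε) * t := by
  obtain ⟨_, ⟨x, hx, rfl⟩, hlt⟩ :=
    Real.lt_sInf_add_pos ⟨_, Set.mem_image_of_mem (idxFun ρ) (Set.mem_Ioi.mpr one_lt_two)⟩ hε
  have hlog : 0 < Real.log x := Real.log_pos hx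
  refine ⟨Real.log x, hlog, ?_⟩
  rw [logConj_log (zero_lt_one.trans hx)]
  exact ((div_lt_iff₀ hlog).mp hlt).le

theorem exists_neg_logConj_le_alphaIdx_sub {ε : ℝ} (hε : 0 < ε) :
    ∃ t < 0, logConj ρ t ≤ (alphaIdx ρ - ε) * t := by
  have half_mem : (1 / 2 : ℝ) ∈ Set.Ioo 0 1 := by norm_num
  obtain ⟨_, ⟨x, hx, rfl⟩, hlt⟩ :=
    Real.add_neg_lt_sSup ⟨_, Set.mem_image_of_mem (idxFun ρ) half_mem⟩ (neg_lt_zero.mpr hε)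
  have hlog : Real.log x < 0 := Real.log_neg hx.1 hx.2
  refine ⟨Real.log x, hlog, ?_⟩
  rw [logConj_log hx.1]
  have hlt' : alphaIdx ρ - ε < idxFun ρ x := by rw [sub_eq_add_neg]; exact hlt
  exact ((lt_div_iff_of_neg hlog).mp hlt').le

theorem eventually_logConj_le_betaIdx_add (hpos : PosOn ρ) (hreg : Regular ρ)
    (hsub : Submult ρ) {ε : ℝ} (hε : 0 < ε) :
    ∀ᶠ t in atTop, logConj ρ t ≤ (betaIdx ρ + ε) * t := by
  obtain ⟨C, hC⟩ := hreg.exists_eventually_logConj_le hpos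
  obtain ⟨t₁, ht₁, hγ⟩ := exists_pos_logConj_le_betaIdx_add (ρ := ρ) (half_pos hε)
  simpa [add_assoc] using
    subadditive_eventually_le_mul (logConj_add_le hpos hsub) hC ht₁ hγ (half_pos hε)

theorem eventually_logConj_neg_le_alphaIdx_sub (hpos : PosOn ρ) (hreg : Regular ρ)
    (hsub : Submult ρ) {ε : ℝ} (hε : 0 < ε) :
    ∀ᶠ t in atTop, logConj ρ (-t) ≤ (alphaIdx ρ - ε) * -t := by
  obtain ⟨C, hC⟩ := hreg.exists_eventually_logConj_le hpos
  obtain ⟨t₂, ht₂, hγ⟩ := exists_neg_logConj_le_alphaIdx_sub (ρ := ρ) (half_pos hε)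
  have hsub' (s t : ℝ) : logConj ρ (-(s + t)) ≤ logConj ρ (-s) + logConj ρ (-t) := by
    rw [neg_add]; exact logConj_add_le hpos hsub (-s) (-t)
  have hC' : ∀ᶠ t in 𝓝 0, logConj ρ (-t) ≤ C :=
    (continuous_neg.tendsto' 0 0 neg_zero).eventually hC
  have hγ' : logConj ρ (- -t₂) ≤ -(alphaIdx ρ - ε / 2) * -t₂ := by
    rwa [neg_neg, neg_mul_neg]
  filter_upwards [subadditive_eventually_le_mul hsub' hC' (neg_pos.mpr ht₂) hγ' (half_pos hε)]
    with t ht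
  linarith

end Indices

/-- If `ρ : (0,∞) → (0,∞)` is regular and submultiplicative, then for every `ε > 0`
there is `x₀ > 1` with `ρ(x) ≤ x^{α(ρ)−ε}` on `(0, x₀⁻¹)` and
`ρ(x) ≤ x^{β(ρ)+ε}` on `(x₀, ∞)`. -/
theorem rho_le_rpow_indices (ρ : ℝ → ℝ)
    (hpos : PosOn ρ) (hreg : Regular ρ) (hsub : Submult ρ) :
    ∀ ε > (0:ℝ), ∃ x₀ > (1:ℝ),
      (∀ x ∈ Set.Ioo (0:ℝ) x₀⁻¹, ρ x ≤ x ^ (alphaIdx ρ - ε)) ∧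
      (∀ x ∈ Set.Ioi x₀, ρ x ≤ x ^ (betaIdx ρ + ε)) := by
  intro ε hε
  obtain ⟨T, hT⟩ := ((eventually_logConj_le_betaIdx_add hpos hreg hsub hε).and
    ((eventually_logConj_neg_le_alphaIdx_sub hpos hreg hsub hε).and
      (eventually_gt_atTop 0))).exists_forall_of_atTop
  refine ⟨Real.exp T, Real.one_lt_exp_iff.mpr (hT T le_rfl).2.2, fun x hx => ?_, fun x hx => ?_⟩
  · have hT_le : T ≤ -Real.log x := by
      have := Real.log_lt_log hx.1 hx.2
      rw [Real.log_inv, Real.log_exp] at this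
      linarith
    rw [Real.le_rpow_iff_log_le (hpos x hx.1) hx.1]
    simpa [logConj_log hx.1] using (hT _ hT_le).2.1
  · have hx0 : 0 < x := (Real.exp_pos T).trans hx
    have hT_le : T ≤ Real.log x := (Real.lt_log_iff_exp_lt hx0).mpr hx |>.le
    rw [Real.le_rpow_iff_log_le (hpos x hx0) hx0]
    simpa [logConj_log hx0] using (hT _ hT_le).1
end
end

section
/- Let Γ be a Carleson curve and t ∈ Γ such that arg(τ−t) = −δ log|τ−t| + O(1) as τ→t for some δ∈ℝ. Then the spirality indices satisfy δ_t⁻ = δ_t⁺ = δ. -/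
open MeasureTheory

noncomputable section

open MeasureTheory in
/-- A simple curve in `ℂ`: homeomorphic image of a segment or of a circle. -/
def IsSimpleCurve (Γ : Set ℂ) : Prop :=
  ∃ f : ℝ → ℂ, ContinuousOn f (Set.Icc 0 1) ∧ f '' Set.Icc 0 1 = Γ ∧
    (Set.InjOn f (Set.Icc 0 1) ∨ (Set.InjOn f (Set.Ico 0 1) ∧ f 0 = f 1))

open MeasureTheory in
/-- Arc-length measure on a rectifiable curve: 1-dimensional Hausdorff measure restricted. -/
noncomputable def arcMeasure (Γ : Set ℂ) : Measure ℂ :=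
  (Measure.hausdorffMeasure 1 : Measure ℂ).restrict Γ

open MeasureTheory in
/-- Rectifiability: finite one-dimensional Hausdorff measure. -/
def IsRectifiable (Γ : Set ℂ) : Prop := (Measure.hausdorffMeasure 1 : Measure ℂ) Γ < ⊤

/-- A Carleson (Ahlfors–David regular) curve:
`sup_{t ∈ Γ} sup_{ε>0} |Γ(t,ε)|/ε < ∞` where `Γ(t,ε) = {τ ∈ Γ : |τ - t| < ε}`. -/
def IsCarleson (Γ : Set ℂ) : Prop :=
  IsSimpleCurve Γ ∧ IsRectifiable Γ ∧
    ∃ C : ℝ, ∀ t ∈ Γ, ∀ ε > (0:ℝ), (arcMeasure Γ (Metric.ball t ε)).toReal ≤ C * ε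

/-- `d_t = max_{τ ∈ Γ} |τ - t|`. -/
noncomputable def dCurve (Γ : Set ℂ) (t : ℂ) : ℝ :=
  sSup ((fun τ => ‖τ - t‖) '' Γ)

/-- Supremum of `ψ` over the part of `Γ` on the circle `{|τ - t| = R}`. -/
noncomputable def circSup (Γ : Set ℂ) (t : ℂ) (ψ : ℂ → ℝ) (R : ℝ) : ℝ :=
  sSup (ψ '' {τ | τ ∈ Γ ∧ ‖τ - t‖ = R})

/-- Infimum of `ψ` over the part of `Γ` on the circle `{|τ - t| = R}`. -/
noncomputable def circInf (Γ : Set ℂ) (t : ℂ) (ψ : ℂ → ℝ) (R : ℝ) : ℝ :=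
  sInf (ψ '' {τ | τ ∈ Γ ∧ ‖τ - t‖ = R})

/-- The oscillation function `(W_t ψ)(x)` of Böttcher–Karlovich. -/
noncomputable def Wt (Γ : Set ℂ) (t : ℂ) (ψ : ℂ → ℝ) (x : ℝ) : ℝ :=
  if x ≤ 1 then
    sSup ((fun R => circSup Γ t ψ (x * R) / circInf Γ t ψ R) '' Set.Ioc 0 (dCurve Γ t))
  else
    sSup ((fun R => circSup Γ t ψ R / circInf Γ t ψ (x⁻¹ * R)) '' Set.Ioc 0 (dCurve Γ t))

/-- `a` is a continuous branch of `arg(· - t)` on `Γ \ {t}`. -/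
def IsArgBranch (Γ : Set ℂ) (t : ℂ) (a : ℂ → ℝ) : Prop :=
  ContinuousOn a (Γ \ {t}) ∧
    ∀ τ ∈ Γ \ {t}, τ - t = (‖τ - t‖ : ℂ) * Complex.exp (a τ * Complex.I)

/-- `η_t(τ) = e^{-arg(τ - t)}` for the chosen branch `a` of the argument. -/
noncomputable def etaW (a : ℂ → ℝ) (τ : ℂ) : ℝ := Real.exp (-(a τ))

/-- `φ_{t,γ}(τ) = |τ-t|^{Re γ} η_t(τ)^{Im γ} = exp(Re γ · log|τ-t| - Im γ · arg(τ-t))`. -/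
noncomputable def phiW (t : ℂ) (a : ℂ → ℝ) (γ : ℂ) (τ : ℂ) : ℝ :=
  Real.exp (γ.re * Real.log (‖τ - t‖) - γ.im * a τ)

/-- Lower spirality index `δ_t⁻ = α(W_t η_t)`. -/
noncomputable def spirMinus (Γ : Set ℂ) (t : ℂ) (a : ℂ → ℝ) : ℝ := alphaIdx (Wt Γ t (etaW a))

/-- Upper spirality index `δ_t⁺ = β(W_t η_t)`. -/
noncomputable def spirPlus (Γ : Set ℂ) (t : ℂ) (a : ℂ → ℝ) : ℝ := betaIdx (Wt Γ t (etaW a))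

/-!
The hypothesis, together with continuity of the branch `a` away from `t`, makes
`η_t(τ) = e^{-a(τ)}` comparable to `|τ - t|^δ` up to a factor `e^{±K}` on all of `Γ`, so
`e^{-2K} x^δ ≤ (W_t η_t)(x) ≤ e^{2K} x^δ`. Hence `log W(x) / log x → δ` as `x → 0` and as
`x → ∞`. Submultiplicativity of `W` on `(0, 1)` and on `(1, ∞)` upgrades the lower bound to
`W(x) ≥ x^δ` (apply it to `x^n` and take `n`-th roots), so `δ` is also a bound for the
supremum defining `α` and the infimum defining `β`.
-/

open Set Filter Topology Real

def SubmultOn (s : Set ℝ) (ρ : ℝ → ℝ) : Prop :=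
  ∀ x ∈ s, ∀ y ∈ s, ρ (x * y) ≤ ρ x * ρ y

lemma abs_log_sub_le_of_mem_Icc {y u K : ℝ} (hy : y ∈ Icc (exp (u - K)) (exp (u + K))) :
    |log y - u| ≤ K := by
  have hy₀ : 0 < y := (exp_pos _).trans_le hy.1
  have h₁ := log_le_log (exp_pos _) hy.1
  have h₂ := log_le_log hy₀ hy.2
  rw [log_exp] at h₁ h₂
  exact abs_sub_le_iff.2 ⟨by linarith, by linarith⟩

section Index

variable {ρ : ℝ → ℝ} {δ K : ℝ}

lemma SubmultOn.pow_succ_le {s : Set ℝ} (hsub : SubmultOn s ρ)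
    (hs : ∀ x ∈ s, ∀ y ∈ s, x * y ∈ s) (hρ : ∀ x ∈ s, 0 ≤ ρ x) {x : ℝ} (hx : x ∈ s) :
    ∀ n : ℕ, x ^ (n + 1) ∈ s ∧ ρ (x ^ (n + 1)) ≤ ρ x ^ (n + 1)
  | 0 => by simpa using hx
  | n + 1 => by
    obtain ⟨hmem, hle⟩ := hsub.pow_succ_le hs hρ hx n
    rw [pow_succ x (n + 1), pow_succ (ρ x) (n + 1)]
    exact ⟨hs _ hmem _ hx, (hsub _ hmem _ hx).trans
      (mul_le_mul_of_nonneg_right hle (hρ x hx))⟩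

lemma mul_log_le_log_of_submultOn {s : Set ℝ} (hsub : SubmultOn s ρ)
    (hs : ∀ x ∈ s, ∀ y ∈ s, x * y ∈ s) (hρ : ∀ x ∈ s, exp (δ * log x - K) ≤ ρ x)
    {x : ℝ} (hx : x ∈ s) : δ * log x ≤ log (ρ x) := by
  have hpos : ∀ y ∈ s, 0 < ρ y := fun y hy => (exp_pos _).trans_le (hρ y hy)
  have hbound : ∀ n : ℕ, δ * log x ≤ log (ρ x) + K / (n + 1 : ℕ) := by
    intro n
    obtain ⟨hmem, hle⟩ := hsub.pow_succ_le hs (fun y hy => (hpos y hy).le) hx n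
    have hlow := log_le_log (exp_pos _) (hρ _ hmem)
    have hup := log_le_log (hpos _ hmem) hle
    rw [log_exp, log_pow] at hlow
    rw [log_pow] at hup
    have : δ * log x - log (ρ x) ≤ K / (n + 1 : ℕ) := by
      rw [le_div_iff₀ (by positivity)]
      linarith
    linarith
  have hlim : Tendsto (fun n : ℕ => log (ρ x) + K / (n + 1 : ℕ)) atTop (𝓝 (log (ρ x))) := by
    simpa using tendsto_const_nhds.add
      ((tendsto_const_div_atTop_nhds_zero_nat K).comp (tendsto_add_atTop_nat 1))
  exact ge_of_tendsto' hlim hbound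

lemma tendsto_idxFun {l : Filter ℝ}
    (hρ : ∀ᶠ x in l, ρ x ∈ Icc (exp (δ * log x - K)) (exp (δ * log x + K)))
    (hl : Tendsto (fun x => |log x|) l atTop) : Tendsto (idxFun ρ) l (𝓝 δ) := by
  have hdist : ∀ᶠ x in l, |idxFun ρ x - δ| ≤ K / |log x| := by
    filter_upwards [hρ, hl.eventually_gt_atTop 0] with x hx hlog
    have hne : log x ≠ 0 := abs_pos.1 hlog
    rw [idxFun, div_sub' hne, abs_div, mul_comm]
    exact div_le_div_of_nonneg_right (abs_log_sub_le_of_mem_Icc hx) (abs_nonneg _)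
  rw [tendsto_iff_norm_sub_tendsto_zero]
  exact squeeze_zero' (.of_forall fun _ => norm_nonneg _) hdist
    (tendsto_const_nhds.div_atTop hl)

lemma alphaIdx_eq_of_submultOn (hsub : SubmultOn (Ioo 0 1) ρ)
    (hρ : ∀ x ∈ Ioo (0 : ℝ) 1, ρ x ∈ Icc (exp (δ * log x - K)) (exp (δ * log x + K))) :
    alphaIdx ρ = δ := by
  have hs : ∀ x ∈ Ioo (0 : ℝ) 1, ∀ y ∈ Ioo (0 : ℝ) 1, x * y ∈ Ioo (0 : ℝ) 1 :=
    fun x hx y hy =>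
      ⟨mul_pos hx.1 hy.1, mul_lt_one_of_nonneg_of_lt_one_left hx.1.le hx.2 hy.2.le⟩
  have hlim : Tendsto (idxFun ρ) (𝓝[>] 0) (𝓝 δ) :=
    tendsto_idxFun (eventually_of_mem (Ioo_mem_nhdsGT one_pos) hρ)
      (tendsto_abs_atBot_atTop.comp tendsto_log_nhdsGT_zero)
  refine csSup_eq_of_forall_le_of_forall_lt_exists_gt
    ⟨_, mem_image_of_mem _ ⟨half_pos one_pos, one_half_lt_one⟩⟩ ?_ fun w hw => ?_
  · rintro _ ⟨x, hx, rfl⟩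
    rw [idxFun, div_le_iff_of_neg (log_neg hx.1 hx.2)]
    exact mul_log_le_log_of_submultOn hsub hs (fun y hy => (hρ y hy).1) hx
  · obtain ⟨x, hx, hwx⟩ := ((eventually_mem_set.2 (Ioo_mem_nhdsGT one_pos)).and
      (hlim.eventually (lt_mem_nhds hw))).exists
    exact ⟨_, mem_image_of_mem _ hx, hwx⟩

lemma betaIdx_eq_of_submultOn (hsub : SubmultOn (Ioi 1) ρ)
    (hρ : ∀ x ∈ Ioi (1 : ℝ), ρ x ∈ Icc (exp (δ * log x - K)) (exp (δ * log x + K))) :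
    betaIdx ρ = δ := by
  have hs : ∀ x ∈ Ioi (1 : ℝ), ∀ y ∈ Ioi (1 : ℝ), x * y ∈ Ioi (1 : ℝ) :=
    fun x hx y hy => mem_Ioi.2 (one_lt_mul_of_lt_of_le hx (le_of_lt hy))
  have hlim : Tendsto (idxFun ρ) atTop (𝓝 δ) :=
    tendsto_idxFun (eventually_of_mem (Ioi_mem_atTop 1) hρ)
      (tendsto_abs_atTop_atTop.comp tendsto_log_atTop)
  refine csInf_eq_of_forall_ge_of_forall_gt_exists_lt
    ⟨_, mem_image_of_mem _ (mem_Ioi.2 one_lt_two)⟩ ?_ fun w hw => ?_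
  · rintro _ ⟨x, hx, rfl⟩
    rw [idxFun, le_div_iff₀ (log_pos hx)]
    exact mul_log_le_log_of_submultOn hsub hs (fun y hy => (hρ y hy).1) hx
  · obtain ⟨x, hx, hwx⟩ := ((eventually_mem_set.2 (Ioi_mem_atTop 1)).and
      (hlim.eventually (gt_mem_nhds hw))).exists
    exact ⟨_, mem_image_of_mem _ hx, hwx⟩

end Index

lemma IsCompact.exists_abs_le_of_continuousOn_diff_singleton {E : Type*}
    [SeminormedAddCommGroup E] {Γ : Set E} (hΓ : IsCompact Γ) {t : E} {g : E → ℝ}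
    (hg : ContinuousOn g (Γ \ {t}))
    (hnear : ∃ C : ℝ, ∃ ε₀ > (0 : ℝ), ∀ τ ∈ Γ \ {t}, ‖τ - t‖ < ε₀ → |g τ| ≤ C) :
    ∃ K : ℝ, ∀ τ ∈ Γ \ {t}, |g τ| ≤ K := by
  obtain ⟨C, ε₀, hε₀, hC⟩ := hnear
  have hfar : Γ ∩ {τ | ε₀ ≤ ‖τ - t‖} ⊆ Γ \ {t} := fun τ hτ =>
    ⟨hτ.1, fun h => by simp [mem_singleton_iff.1 h] at hτ; linarith [hτ.2]⟩
  have hcompact : IsCompact (Γ ∩ {τ | ε₀ ≤ ‖τ - t‖}) :=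
    hΓ.inter_right (isClosed_le continuous_const (by fun_prop))
  obtain ⟨C', hC'⟩ := hcompact.exists_bound_of_continuousOn (hg.mono hfar)
  refine ⟨max C C', fun τ hτ => ?_⟩
  rcases lt_or_ge ‖τ - t‖ ε₀ with hlt | hge
  · exact (hC τ hτ hlt).trans (le_max_left _ _)
  · exact (hC' τ ⟨hτ.1, hge⟩).trans (le_max_right _ _)

namespace IsSimpleCurve

variable {Γ : Set ℂ}

lemma isCompact (hΓ : IsSimpleCurve Γ) : IsCompact Γ := by
  obtain ⟨f, hf, rfl, -⟩ := hΓ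
  exact isCompact_Icc.image_of_continuousOn hf

lemma isPreconnected (hΓ : IsSimpleCurve Γ) : IsPreconnected Γ := by
  obtain ⟨f, hf, rfl, -⟩ := hΓ
  exact isPreconnected_Icc.image f hf

lemma nontrivial (hΓ : IsSimpleCurve Γ) : Γ.Nontrivial := by
  obtain ⟨f, -, rfl, hinj⟩ := hΓ
  have hinj' : InjOn f (Ico 0 1) := hinj.elim (·.mono Ico_subset_Icc_self) (·.1)
  exact ⟨f 0, ⟨0, by norm_num, rfl⟩, f (1 / 2), ⟨1 / 2, by norm_num, rfl⟩,
    hinj'.ne (by norm_num) (by norm_num) (by norm_num)⟩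

lemma dCurve_pos (hΓ : IsSimpleCurve Γ) (t : ℂ) : 0 < dCurve Γ t := by
  obtain ⟨p, hp, hpt⟩ := hΓ.nontrivial.exists_ne t
  have hbdd : BddAbove ((fun τ : ℂ => ‖τ - t‖) '' Γ) :=
    (hΓ.isCompact.image (by fun_prop)).bddAbove
  exact (norm_pos_iff.2 (sub_ne_zero.2 hpt)).trans_le (le_csSup hbdd ⟨p, hp, rfl⟩)

lemma exists_norm_sub_eq (hΓ : IsSimpleCurve Γ) {t : ℂ} (ht : t ∈ Γ) {R : ℝ}
    (hR : R ∈ Icc 0 (dCurve Γ t)) : ∃ τ ∈ Γ, ‖τ - t‖ = R := by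
  have hcont : Continuous fun τ : ℂ => ‖τ - t‖ := by fun_prop
  have hmax : dCurve Γ t ∈ (fun τ => ‖τ - t‖) '' Γ :=
    (hΓ.isCompact.image hcont).sSup_mem ⟨_, mem_image_of_mem _ ht⟩
  have hzero : (0 : ℝ) ∈ (fun τ => ‖τ - t‖) '' Γ := ⟨t, ht, by simp⟩
  exact (hΓ.isPreconnected.image _ hcont.continuousOn).Icc_subset hzero hmax hR

end IsSimpleCurve

def circRatio (Γ : Set ℂ) (t : ℂ) (ψ : ℂ → ℝ) (x s : ℝ) : ℝ :=
  circSup Γ t ψ (x * s) / circInf Γ t ψ s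

def scaledRadii (d x : ℝ) : Set ℝ := {s | s ∈ Ioc 0 d ∧ x * s ∈ Ioc 0 d}

lemma scaledRadii_nonempty {d x : ℝ} (hd : 0 < d) (hx : 0 < x) :
    (scaledRadii d x).Nonempty := by
  refine ⟨min d (d / x), ⟨by positivity, min_le_left _ _⟩, by positivity, ?_⟩
  calc x * min d (d / x) ≤ x * (d / x) := by gcongr; exact min_le_right _ _
    _ = d := mul_div_cancel₀ d hx.ne'

/-- For `x > 1` this is the substitution `R = x * s` in the definition of `Wt`. -/
lemma Wt_eq_sSup_circRatio {Γ : Set ℂ} {t : ℂ} {ψ : ℂ → ℝ} {x : ℝ} (hx : 0 < x) :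
    Wt Γ t ψ x = sSup (circRatio Γ t ψ x '' scaledRadii (dCurve Γ t) x) := by
  unfold Wt
  split_ifs with hx1
  · congr 2
    ext s
    exact ⟨fun hs => ⟨hs, mul_pos hx hs.1, (mul_le_of_le_one_left hs.1.le hx1).trans hs.2⟩,
      (·.1)⟩
  · congr 1
    ext w
    constructor
    · rintro ⟨R, hR, rfl⟩
      have hxinv : x⁻¹ ≤ 1 := inv_le_one_of_one_le₀ (not_le.1 hx1).le
      refine ⟨x⁻¹ * R, ⟨⟨mul_pos (inv_pos.2 hx) hR.1, ?_⟩, by rwa [mul_inv_cancel_left₀ hx.ne']⟩,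
        ?_⟩
      · exact (mul_le_of_le_one_left hR.1.le hxinv).trans hR.2
      · simp only [circRatio, mul_inv_cancel_left₀ hx.ne']
    · rintro ⟨s, hs, rfl⟩
      exact ⟨x * s, hs.2, by simp only [circRatio, inv_mul_cancel_left₀ hx.ne']⟩

def HasCircleBounds (Γ : Set ℂ) (t : ℂ) (ψ : ℂ → ℝ) (δ K : ℝ) : Prop :=
  ∀ R ∈ Ioc 0 (dCurve Γ t), exp (δ * log R - K) ≤ circInf Γ t ψ R ∧
    circInf Γ t ψ R ≤ circSup Γ t ψ R ∧ circSup Γ t ψ R ≤ exp (δ * log R + K)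

lemma hasCircleBounds_of_forall_mem_Icc {Γ : Set ℂ} {t : ℂ} {ψ : ℂ → ℝ} {δ K : ℝ}
    (hcirc : ∀ R ∈ Ioc 0 (dCurve Γ t), ∃ τ ∈ Γ, ‖τ - t‖ = R)
    (hψ : ∀ τ ∈ Γ \ {t},
      ψ τ ∈ Icc (exp (δ * log ‖τ - t‖ - K)) (exp (δ * log ‖τ - t‖ + K))) :
    HasCircleBounds Γ t ψ δ K := by
  intro R hR
  have hsub : ψ '' {τ | τ ∈ Γ ∧ ‖τ - t‖ = R} ⊆
      Icc (exp (δ * log R - K)) (exp (δ * log R + K)) := by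
    rintro _ ⟨τ, ⟨hτ, rfl⟩, rfl⟩
    refine hψ τ ⟨hτ, fun h => ?_⟩
    rw [mem_singleton_iff.1 h, sub_self, norm_zero] at hR
    exact lt_irrefl _ hR.1
  obtain ⟨τ, hτ, hτR⟩ := hcirc R hR
  have hne : (ψ '' {τ | τ ∈ Γ ∧ ‖τ - t‖ = R}).Nonempty := ⟨_, τ, ⟨hτ, hτR⟩, rfl⟩
  exact ⟨le_csInf hne fun y hy => (hsub hy).1,
    csInf_le_csSup hne ⟨_, fun y hy => (hsub hy).1⟩ ⟨_, fun y hy => (hsub hy).2⟩,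
    csSup_le hne fun y hy => (hsub hy).2⟩

namespace HasCircleBounds

variable {Γ : Set ℂ} {t : ℂ} {ψ : ℂ → ℝ} {δ K : ℝ}

lemma circInf_pos (h : HasCircleBounds Γ t ψ δ K) {R : ℝ} (hR : R ∈ Ioc 0 (dCurve Γ t)) :
    0 < circInf Γ t ψ R :=
  (exp_pos _).trans_le (h R hR).1

lemma circRatio_mem_Icc (h : HasCircleBounds Γ t ψ δ K) {x s : ℝ} (hx : 0 < x)
    (hs : s ∈ scaledRadii (dCurve Γ t) x) :
    circRatio Γ t ψ x s ∈ Icc (exp (δ * log x - 2 * K)) (exp (δ * log x + 2 * K)) := by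
  obtain ⟨hs₁, hs₂, hs₃⟩ := h s hs.1
  obtain ⟨hxs₁, hxs₂, hxs₃⟩ := h (x * s) hs.2
  have hlog : log (x * s) = log x + log s := log_mul hx.ne' hs.1.1.ne'
  constructor
  · calc exp (δ * log x - 2 * K) = exp (δ * log (x * s) - K) / exp (δ * log s + K) := by
          rw [← exp_sub, hlog]; ring_nf
      _ ≤ circRatio Γ t ψ x s :=
          div_le_div₀ ((h.circInf_pos hs.2).le.trans hxs₂) (hxs₁.trans hxs₂)
            (h.circInf_pos hs.1) (hs₂.trans hs₃)
  · calc circRatio Γ t ψ x s ≤ exp (δ * log (x * s) + K) / exp (δ * log s - K) :=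
          div_le_div₀ (exp_pos _).le hxs₃ (exp_pos _) hs₁
      _ = exp (δ * log x + 2 * K) := by rw [← exp_sub, hlog]; ring_nf

lemma circRatio_le_Wt (h : HasCircleBounds Γ t ψ δ K) {x s : ℝ} (hx : 0 < x)
    (hs : s ∈ scaledRadii (dCurve Γ t) x) : circRatio Γ t ψ x s ≤ Wt Γ t ψ x := by
  rw [Wt_eq_sSup_circRatio hx]
  exact le_csSup ⟨_, by rintro _ ⟨s', hs', rfl⟩; exact (h.circRatio_mem_Icc hx hs').2⟩
    (mem_image_of_mem _ hs)

lemma Wt_mem_Icc (h : HasCircleBounds Γ t ψ δ K) (hd : 0 < dCurve Γ t) {x : ℝ}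
    (hx : 0 < x) :
    Wt Γ t ψ x ∈ Icc (exp (δ * log x - 2 * K)) (exp (δ * log x + 2 * K)) := by
  obtain ⟨s, hs⟩ := scaledRadii_nonempty hd hx
  refine ⟨(h.circRatio_mem_Icc hx hs).1.trans (h.circRatio_le_Wt hx hs), ?_⟩
  rw [Wt_eq_sSup_circRatio hx]
  exact csSup_le ⟨_, mem_image_of_mem _ hs⟩ (by
    rintro _ ⟨s', hs', rfl⟩; exact (h.circRatio_mem_Icc hx hs').2)

/-- Since `circInf ≤ circSup` on the intermediate circle of radius `y * s`, the ratios
telescope. -/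
lemma circRatio_mul_le (h : HasCircleBounds Γ t ψ δ K) {x y s : ℝ}
    (hs : s ∈ scaledRadii (dCurve Γ t) (x * y)) (hys : y * s ∈ Ioc 0 (dCurve Γ t)) :
    circRatio Γ t ψ (x * y) s ≤ circRatio Γ t ψ x (y * s) * circRatio Γ t ψ y s := by
  have hxys := h (x * y * s) hs.2
  have hsup : 0 ≤ circSup Γ t ψ (x * (y * s)) := by
    rw [← mul_assoc]; exact ((exp_pos _).le.trans hxys.1).trans hxys.2.1
  calc circRatio Γ t ψ (x * y) s
      = circRatio Γ t ψ x (y * s) * (circInf Γ t ψ (y * s) / circInf Γ t ψ s) := by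
        simp only [circRatio, mul_assoc]
        rw [div_mul_div_cancel₀ (h.circInf_pos hys).ne']
    _ ≤ circRatio Γ t ψ x (y * s) * circRatio Γ t ψ y s := by
        refine mul_le_mul_of_nonneg_left ?_ (div_nonneg hsup (h.circInf_pos hys).le)
        exact div_le_div_of_nonneg_right (h (y * s) hys).2.1 (h.circInf_pos hs.1).le

lemma Wt_mul_le (h : HasCircleBounds Γ t ψ δ K) (hd : 0 < dCurve Γ t) {x y : ℝ}
    (hx : 0 < x) (hy : 0 < y) (hxy : y ≤ 1 ∨ 1 ≤ x) :
    Wt Γ t ψ (x * y) ≤ Wt Γ t ψ x * Wt Γ t ψ y := by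
  rw [Wt_eq_sSup_circRatio (mul_pos hx hy)]
  refine csSup_le ((scaledRadii_nonempty hd (mul_pos hx hy)).image _) ?_
  rintro _ ⟨s, hs, rfl⟩
  have hys : y * s ∈ Ioc 0 (dCurve Γ t) := by
    refine ⟨mul_pos hy hs.1.1, ?_⟩
    rcases hxy with hy1 | hx1
    · exact (mul_le_of_le_one_left hs.1.1.le hy1).trans hs.1.2
    · have hxys : x * (y * s) ≤ dCurve Γ t := by rw [← mul_assoc]; exact hs.2.2
      exact (le_mul_of_one_le_left (mul_pos hy hs.1.1).le hx1).trans hxys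
  have hys' : y * s ∈ scaledRadii (dCurve Γ t) x := ⟨hys, by rw [← mul_assoc]; exact hs.2⟩
  calc circRatio Γ t ψ (x * y) s ≤ circRatio Γ t ψ x (y * s) * circRatio Γ t ψ y s :=
        h.circRatio_mul_le hs hys
    _ ≤ Wt Γ t ψ x * Wt Γ t ψ y :=
        mul_le_mul (h.circRatio_le_Wt hx hys') (h.circRatio_le_Wt hy ⟨hs.1, hys⟩)
          ((exp_pos _).le.trans (h.circRatio_mem_Icc hy ⟨hs.1, hys⟩).1)
          ((exp_pos _).le.trans (h.Wt_mem_Icc hd hx).1)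

end HasCircleBounds

lemma etaW_mem_Icc {a : ℂ → ℝ} {τ : ℂ} {δ r K : ℝ} (h : |a τ + δ * log r| ≤ K) :
    etaW a τ ∈ Icc (exp (δ * log r - K)) (exp (δ * log r + K)) := by
  obtain ⟨h₁, h₂⟩ := abs_le.1 h
  exact ⟨exp_le_exp.2 (by linarith), exp_le_exp.2 (by linarith)⟩

/-- If `Γ` is a Carleson curve and `arg(τ−t) = −δ log|τ−t| + O(1)` as `τ → t`,
then the spirality indices satisfy `δ_t⁻ = δ_t⁺ = δ`. -/
theorem spirality_of_logarithmic_whirl (Γ : Set ℂ) (hΓ : IsCarleson Γ)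
    (t : ℂ) (ht : t ∈ Γ) (a : ℂ → ℝ) (ha : IsArgBranch Γ t a) (δ : ℝ)
    (hO : ∃ C : ℝ, ∃ ε₀ > (0:ℝ), ∀ τ ∈ Γ \ {t}, ‖τ - t‖ < ε₀ →
      |a τ + δ * Real.log (‖τ - t‖)| ≤ C) :
    spirMinus Γ t a = δ ∧ spirPlus Γ t a = δ := by
  obtain ⟨hsimple, -, -⟩ := hΓ
  have hcont : ContinuousOn (fun τ => a τ + δ * log ‖τ - t‖) (Γ \ {t}) :=
    ha.1.add <| continuousOn_const.mul <| ContinuousOn.log (by fun_prop)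
      fun τ hτ => norm_ne_zero_iff.2 (sub_ne_zero.2 hτ.2)
  obtain ⟨K, hK⟩ := hsimple.isCompact.exists_abs_le_of_continuousOn_diff_singleton hcont hO
  have hW : HasCircleBounds Γ t (etaW a) δ K :=
    hasCircleBounds_of_forall_mem_Icc
      (fun R hR => hsimple.exists_norm_sub_eq ht (Ioc_subset_Icc_self hR))
      (fun τ hτ => etaW_mem_Icc (hK τ hτ))
  have hd := hsimple.dCurve_pos t
  constructor
  · exact alphaIdx_eq_of_submultOn (fun x hx y hy => hW.Wt_mul_le hd hx.1 hy.1 (.inl hy.2.le))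
      fun x hx => hW.Wt_mem_Icc hd hx.1
  · have hpos : ∀ x ∈ Ioi (1 : ℝ), 0 < x := fun x hx => one_pos.trans hx
    exact betaIdx_eq_of_submultOn
      (fun x hx y hy => hW.Wt_mul_le hd (hpos x hx) (hpos y hy) (.inr (le_of_lt hx)))
      fun x hx => hW.Wt_mem_Icc hd (hpos x hx)
end
end
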